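/- The exponential generating function of the barred preferential arrangement numbers satisfies Σ_{l≥0} s_l z^l/l! = 1/(2 − e^z)^2 for |z| < log 2. -/

import Mathlib

def stirling2 : ℕ → ℕ → ℕ
  | 0, 0 => 1
  | 0, _ + 1 => 0
  | _ + 1, 0 => 0
  | n + 1, k + 1 => stirling2 n k + (k + 1) * stirling2 n (k + 1)

/-- Barred preferential arrangement number. -/
def barredFubini (l : ℕ) : ℕ :=
  ∑ k ∈ Finset.range (l + 1), stirling2 l k * Nat.factorial (k + 1)

/-!
Expanding `1 / (2 - e^z)^2 = (1/4) ∑_j (j + 1) (e^z / 2)^j` and every `e^{jz}` in its exponential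
series gives a double series in `(j, l)`, absolutely convergent as soon as `e^{|z|} < 2`. Summed
over `j` first, the coefficient of `z^l / l!` is `∑_j (j + 1) j^l / 2^{j+2}`, and this is `s_l`:
write `j^l = ∑_k S(l,k) j(j-1)⋯(j-k+1)` and use
`∑_j (j + 1) j(j-1)⋯(j-k+1) x^j = (k+1)! x^k / (1 - x)^{k+2}` at `x = 1/2`.
-/

open Finset Nat

theorem stirling2_eq_stirlingSecond : stirling2 = stirlingSecond := by
  funext n k
  induction n generalizing k with
  | zero => cases k <;> rfl
  | succ n ih =>
    cases k with
    | zero => rfl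
    | succ k => rw [stirling2, stirlingSecond_succ_succ, ih, ih, add_comm]

theorem Nat.self_mul_descFactorial (n k : ℕ) :
    n * n.descFactorial k = n.descFactorial (k + 1) + k * n.descFactorial k := by
  rcases le_or_gt k n with hkn | hnk
  · rw [descFactorial_succ, ← add_mul, Nat.sub_add_cancel hkn]
  · rw [descFactorial_eq_zero_iff_lt.2 hnk, descFactorial_eq_zero_iff_lt.2 (by omega)]
    simp

theorem Nat.pow_eq_sum_stirlingSecond_mul_descFactorial (n l : ℕ) :
    n ^ l = ∑ k ∈ range (l + 1), stirlingSecond l k * n.descFactorial k := by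
  induction l with
  | zero => simp
  | succ l ih =>
    have hshift : ∑ k ∈ range (l + 1), k * stirlingSecond l k * n.descFactorial k
        = ∑ k ∈ range (l + 1), (k + 1) * stirlingSecond l (k + 1) * n.descFactorial (k + 1) := by
      have h := sum_range_succ' (fun k => k * stirlingSecond l k * n.descFactorial k) (l + 1)
      rw [sum_range_succ, stirlingSecond_eq_zero_of_lt (lt_succ_self l)] at h
      simpa using h
    calc n ^ (l + 1)
        = ∑ k ∈ range (l + 1), stirlingSecond l k * (n * n.descFactorial k) := by
          rw [pow_succ, ih, sum_mul]
          exact sum_congr rfl fun k _ => by ring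
      _ = ∑ k ∈ range (l + 1), stirlingSecond l k * n.descFactorial (k + 1)
          + ∑ k ∈ range (l + 1), k * stirlingSecond l k * n.descFactorial k := by
          rw [← sum_add_distrib]
          exact sum_congr rfl fun k _ => by rw [self_mul_descFactorial]; ring
      _ = ∑ k ∈ range (l + 1), stirlingSecond (l + 1) (k + 1) * n.descFactorial (k + 1) := by
          rw [hshift, ← sum_add_distrib]
          exact sum_congr rfl fun k _ => by rw [stirlingSecond_succ_succ]; ring
      _ = ∑ k ∈ range (l + 2), stirlingSecond (l + 1) k * n.descFactorial k := by
          simp [sum_range_succ' _ (l + 1)]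

theorem hasSum_succ_mul_descFactorial_mul_geometric {𝕜 : Type*} [NormedField 𝕜] (k : ℕ) {x : 𝕜}
    (hx : ‖x‖ < 1) :
    HasSum (fun j : ℕ => ((j : 𝕜) + 1) * j.descFactorial k * x ^ j)
      ((k + 1)! * x ^ k / (1 - x) ^ (k + 2)) := by
  refine (hasSum_nat_add_iff' k).1 ?_
  rw [sum_eq_zero fun j hj => by
    rw [descFactorial_eq_zero_iff_lt.2 (mem_range.1 hj), cast_zero, mul_zero, zero_mul], sub_zero,
    ← mul_one_div]
  convert! (hasSum_choose_mul_geometric_of_norm_lt_one (k + 1) hx).mul_left ((k + 1)! * x ^ k)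
    using 1
  funext n
  have key : (n + k + 1) * (n + k).descFactorial k = (k + 1)! * (n + (k + 1)).choose (k + 1) := by
    rw [← succ_descFactorial_succ, descFactorial_eq_factorial_mul_choose, add_assoc]
  rw [pow_add, ← cast_succ, ← cast_mul, key]
  push_cast
  ring

theorem hasSum_succ_mul_geometric {𝕜 : Type*} [NormedField 𝕜] {x : 𝕜} (hx : ‖x‖ < 1) :
    HasSum (fun j : ℕ => ((j : 𝕜) + 1) * x ^ j) (1 / (1 - x) ^ 2) := by
  simpa using hasSum_succ_mul_descFactorial_mul_geometric 0 hx

theorem barredFubini_eq_sum_stirlingSecond (l : ℕ) :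
    barredFubini l = ∑ k ∈ range (l + 1), stirlingSecond l k * (k + 1)! := by
  rw [barredFubini, stirling2_eq_stirlingSecond]

theorem hasSum_barredFubini {𝕜 : Type*} [RCLike 𝕜] (l : ℕ) :
    HasSum (fun j : ℕ => ((j : 𝕜) + 1) * j ^ l / 2 ^ (j + 2)) (barredFubini l) := by
  have hhalf : ‖(2⁻¹ : 𝕜)‖ < 1 := by norm_num
  have hk : ∀ k, HasSum (fun j : ℕ => ((j : 𝕜) + 1) * j.descFactorial k / 2 ^ (j + 2))
      ((k + 1)! : 𝕜) := by
    intro k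
    convert (hasSum_succ_mul_descFactorial_mul_geometric k hhalf).div_const 4 using 1
    · funext j
      simp only [inv_pow, pow_add]
      ring
    · field_simp
      ring
  have hterm : ∀ j : ℕ, ((j : 𝕜) + 1) * j ^ l / 2 ^ (j + 2) = ∑ k ∈ range (l + 1),
      stirlingSecond l k * (((j : 𝕜) + 1) * j.descFactorial k / 2 ^ (j + 2)) := fun j => by
    rw [← cast_pow, pow_eq_sum_stirlingSecond_mul_descFactorial, cast_sum, mul_sum, sum_div]
    push_cast
    exact sum_congr rfl fun k _ => by ring
  simp only [hterm, barredFubini_eq_sum_stirlingSecond, cast_sum, cast_mul]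
  exact hasSum_sum fun k _ => (hk k).mul_left _

theorem HasSum.transpose_of_summable_norm {β γ E : Type*} [NormedAddCommGroup E]
    [CompleteSpace E] {f : β × γ → E} {a : β → E} {b : γ → E} {A : E} (ha : HasSum a A)
    (hf : Summable fun p => ‖f p‖) (hrow : ∀ i, HasSum (fun j => f (i, j)) (a i))
    (hcol : ∀ j, HasSum (fun i => f (i, j)) (b j)) : HasSum b A := by
  obtain ⟨S, hS⟩ := hf.of_norm
  obtain rfl := ha.unique (hS.prod_fiberwise hrow)
  exact ((Equiv.prodComm γ β).hasSum_iff.2 hS).prod_fiberwise hcol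

section barredFubiniTerm

open NormedSpace

variable {𝕜 : Type*} [RCLike 𝕜]

def barredFubiniTerm (z : 𝕜) (p : ℕ × ℕ) : 𝕜 :=
  ((p.1 : 𝕜) + 1) / 2 ^ (p.1 + 2) * ((p.1 * z) ^ p.2 / p.2 !)

theorem norm_barredFubiniTerm (z : 𝕜) (p : ℕ × ℕ) :
    ‖barredFubiniTerm z p‖ = barredFubiniTerm ‖z‖ p := by
  simp only [barredFubiniTerm, ← Nat.cast_succ, norm_mul, norm_div, norm_pow, RCLike.norm_natCast,
    RCLike.norm_ofNat]

theorem hasSum_barredFubiniTerm_row (z : 𝕜) (j : ℕ) :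
    HasSum (fun l => barredFubiniTerm z (j, l)) (((j : 𝕜) + 1) / 2 ^ (j + 2) * exp (j * z)) := by
  simpa only [barredFubiniTerm] using (expSeries_div_hasSum_exp ((j : 𝕜) * z)).mul_left _

theorem hasSum_barredFubiniTerm_col (z : 𝕜) (l : ℕ) :
    HasSum (fun j => barredFubiniTerm z (j, l)) (barredFubini l * z ^ l / l !) := by
  convert! (hasSum_barredFubini l).mul_right (z ^ l / l !) using 1
  · funext j
    simp only [barredFubiniTerm, mul_pow]
    ring
  · ring

theorem hasSum_barredFubiniTerm_rowSums {z : 𝕜} (hz : ‖exp z‖ < 2) :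
    HasSum (fun j : ℕ => ((j : 𝕜) + 1) / 2 ^ (j + 2) * exp (j * z)) (1 / (2 - exp z) ^ 2) := by
  have hx : ‖exp z / 2‖ < 1 := by
    rw [norm_div, RCLike.norm_ofNat]
    linarith
  convert! (hasSum_succ_mul_geometric hx).div_const 4 using 1
  · funext j
    rw [← nsmul_eq_mul, exp_nsmul, div_pow]
    ring
  · field_simp
    ring

theorem summable_norm_barredFubiniTerm {z : 𝕜} (hz : Real.exp ‖z‖ < 2) :
    Summable fun p => ‖barredFubiniTerm z p‖ := by
  simp only [norm_barredFubiniTerm]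
  have hrow := hasSum_barredFubiniTerm_row (‖z‖ : ℝ)
  refine (summable_prod_of_nonneg fun p => ?_).2 ⟨fun j => (hrow j).summable, ?_⟩
  · rw [← norm_barredFubiniTerm z]; exact norm_nonneg _
  simp only [(hrow _).tsum_eq]
  refine (hasSum_barredFubiniTerm_rowSums ?_).summable
  rwa [← Real.exp_eq_exp_ℝ, Real.norm_of_nonneg (Real.exp_pos _).le]

end barredFubiniTerm

theorem stmt_12 (z : ℂ) (hz : ‖z‖ < Real.log 2) :
    HasSum (fun l : ℕ => (barredFubini l : ℂ) * z ^ l / (Nat.factorial l))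
      (1 / (2 - Complex.exp z) ^ 2) := by
  have hexp : Real.exp ‖z‖ < 2 := by
    simpa [Real.exp_log] using Real.exp_lt_exp.2 hz
  have hexp_norm : ‖NormedSpace.exp z‖ < 2 := by
    rw [← Complex.exp_eq_exp_ℂ]
    exact (Complex.norm_exp_le_exp_norm z).trans_lt hexp
  rw [Complex.exp_eq_exp_ℂ]
  exact (hasSum_barredFubiniTerm_rowSums hexp_norm).transpose_of_summable_norm
    (summable_norm_barredFubiniTerm hexp) (hasSum_barredFubiniTerm_row z)
    (hasSum_barredFubiniTerm_col z)
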